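/- Successor Identity in Γ_log: for all α, β ∈ Γ_log, if s(α) < s(β) then α − β ≠ 0 and ψ(α − β) = s(α). -/
import Mathlib


noncomputable section

/-- Γ_log : the additive group of finitely supported functions ℕ → ℝ,
linearly ordered lexicographically. -/
abbrev GammaLog : Type := Lex (ℕ →₀ ℝ)

/-- χ_[0,n] : the characteristic function of {0,…,n}. -/
def chiI (n : ℕ) : GammaLog :=
  toLex (Finsupp.indicator (Finset.range (n + 1)) fun _ _ => (1 : ℝ))

/-- For nonzero α, ψ(α) = χ_[0,n] where n is the least index with α(n) ≠ 0
(junk value when α = 0). -/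
def psiL (α : GammaLog) : GammaLog := chiI (sInf {n : ℕ | ofLex α n ≠ 0})

/-- n(α) : the least index with α(n(α)) ≠ 1 (the defining set is nonempty by
finite support). -/
def nuOne (α : GammaLog) : ℕ := sInf {n : ℕ | ofLex α n ≠ 1}

/-- ∫α := α − χ_[0,n(α)]. -/
def intL (α : GammaLog) : GammaLog := α - chiI (nuOne α)

/-- s(α) := ψ(∫α). -/
def sL (α : GammaLog) : GammaLog := psiL (intL α)

lemma chiI_apply (n k : ℕ) : ofLex (chiI n) k = if k ≤ n then 1 else 0 := by
  simp [chiI, Finsupp.indicator_apply, Finset.mem_range, Nat.lt_succ_iff]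

lemma nuOne_nonempty (α : GammaLog) : {n : ℕ | ofLex α n ≠ 1}.Nonempty := by
  obtain ⟨n, hn⟩ := Infinite.exists_notMem_finset (ofLex α).support
  exact ⟨n, by simp [Finsupp.notMem_support_iff.mp hn]⟩

lemma nuOne_spec (α : GammaLog) : ofLex α (nuOne α) ≠ 1 :=
  Nat.sInf_mem (nuOne_nonempty α)

lemma nuOne_lt (α : GammaLog) {k : ℕ} (hk : k < nuOne α) : ofLex α k = 1 := by
  by_contra h
  exact absurd (Nat.sInf_le h) (not_le.mpr hk)

lemma psiL_eq (γ : GammaLog) (n : ℕ) (h0 : ∀ k < n, ofLex γ k = 0)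
    (hn : ofLex γ n ≠ 0) : psiL γ = chiI n := by
  have : sInf {k : ℕ | ofLex γ k ≠ 0} = n := by
    apply le_antisymm (Nat.sInf_le hn)
    by_contra hlt
    push_neg at hlt
    have hmem := Nat.sInf_mem (⟨n, hn⟩ : {k : ℕ | ofLex γ k ≠ 0}.Nonempty)
    exact hmem (h0 _ hlt)
  rw [psiL, this]

lemma ofLex_sub_apply (α β : GammaLog) (k : ℕ) :
    ofLex (α - β) k = ofLex α k - ofLex β k := rfl

lemma sL_eq (α : GammaLog) : sL α = chiI (nuOne α) := by
  apply psiL_eq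
  · intro k hk
    rw [intL, ofLex_sub_apply, nuOne_lt α hk, chiI_apply, if_pos hk.le, sub_self]
  · rw [intL, ofLex_sub_apply, chiI_apply, if_pos le_rfl]
    exact sub_ne_zero.mpr (nuOne_spec α)

lemma chiI_lt_iff {m n : ℕ} : chiI m < chiI n ↔ m < n := by
  constructor
  · intro h
    by_contra hle
    push_neg at hle
    rcases eq_or_lt_of_le hle with rfl | hlt
    · exact lt_irrefl _ h
    have h2 : chiI n < chiI m := by
      refine ⟨n + 1, fun d hd => ?_, ?_⟩
      · simp only [chiI_apply]
        rcases le_or_gt d n with h1 | h1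
        · rw [if_pos h1, if_pos (h1.trans hlt.le)]
        · omega
      · simp only [chiI_apply]
        rw [if_neg (by omega), if_pos (by omega)]
        norm_num
    exact absurd h (asymm h2)
  · intro hlt
    refine ⟨m + 1, fun d hd => ?_, ?_⟩
    · simp only [chiI_apply]
      rcases le_or_gt d m with h1 | h1
      · rw [if_pos h1, if_pos (h1.trans hlt.le)]
      · omega
    · simp only [chiI_apply]
      rw [if_neg (by omega), if_pos (by omega)]
      norm_num

/-- Successor Identity: if s(α) < s(β) then α − β ≠ 0 and ψ(α − β) = s(α). -/
theorem successor_identity (α β : GammaLog) (h : sL α < sL β) :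
    α - β ≠ 0 ∧ psiL (α - β) = sL α := by
  rw [sL_eq, sL_eq, chiI_lt_iff] at h
  have key : ofLex (α - β) (nuOne α) ≠ 0 := by
    rw [ofLex_sub_apply, nuOne_lt β h, sub_ne_zero]
    exact nuOne_spec α
  constructor
  · intro h0
    apply key
    rw [h0]; rfl
  · rw [sL_eq]
    apply psiL_eq
    · intro k hk
      rw [ofLex_sub_apply, nuOne_lt α hk, nuOne_lt β (hk.trans h), sub_self]
    · exact key
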